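/- Let K be a commutative ring and v, w : ℕ → K. Define A(n,k) by the recurrence A(n,k) = A(n-1,k-1) + (v_{n-1} + w_k)·A(n-1,k) with A(0,n)=δ_{0,n} and A(n,0)=∏_{i=0}^{n-1}(v_i + w_0). Then A(n,k) = ∑_{0 ≤ i_1 ≤ i_2 ≤ ... ≤ i_{n-k} ≤ k} ∏_{j=1}^{n-k} (v_{i_j + j - 1} + w_{i_j}). -/

import Mathlib

open Finset

/-- The generalized two-weight array `A^{v,w}(n,k)`. -/
def A {K : Type*} [CommRing K] (v w : ℕ → K) : ℕ → ℕ → K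
  | 0, 0 => 1
  | 0, _ + 1 => 0
  | n + 1, 0 => (v n + w 0) * A v w n 0
  | n + 1, k + 1 => A v w n k + (v n + w (k + 1)) * A v w n (k + 1)

/-!
With the weight `x i j = v (i + j) + w i`, the sum over weakly increasing tuples
`f : Fin m → Fin (k + 1)` of `∏ j, x (f j) j` satisfies the recurrence of `A` in the variables
`(m, k) = (n - k, k)`: a tuple `Fin (m + 1) → Fin (k + 2)` either ends in the top value `k + 1`,
and removing that entry leaves a tuple of length `m`, or all of its values lie below `k + 1`, and
it is a tuple into `Fin (k + 1)`.
The boundary values agree as well, since the only tuple of length `0` is empty and the only tuple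
into `Fin 1` is constant.
-/

lemma Fin.monotone_snoc_iff {α : Type*} [Preorder α] {m : ℕ} {g : Fin m → α} {a : α} :
    Monotone (Fin.snoc g a : Fin (m + 1) → α) ↔ Monotone g ∧ ∀ i, g i ≤ a := by
  refine ⟨fun h => ⟨fun i j hij => ?_, fun i => ?_⟩, fun ⟨hg, ha⟩ i j hij => ?_⟩
  · simpa using h (Fin.castSucc_le_castSucc_iff.2 hij)
  · simpa using h (Fin.le_last (Fin.castSucc i))
  · induction j using Fin.lastCases with
    | last => induction i using Fin.lastCases <;> simp [ha]
    | cast j =>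
      induction i using Fin.lastCases with
      | last => exact absurd hij (not_le.2 (Fin.castSucc_lt_last j))
      | cast i => simpa using hg (Fin.castSucc_le_castSucc_iff.1 hij)

def monotoneTuples (m n : ℕ) : Finset (Fin m → Fin n) :=
  univ.filter fun f => ∀ a b, a ≤ b → f a ≤ f b

lemma mem_monotoneTuples {m n : ℕ} {f : Fin m → Fin n} :
    f ∈ monotoneTuples m n ↔ Monotone f := by
  simp [monotoneTuples, Monotone]

section MonotoneTupleSum

variable {K : Type*} [CommRing K] (x : ℕ → ℕ → K)

def monotoneTupleSum (m k : ℕ) : K :=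
  ∑ f ∈ monotoneTuples m (k + 1), ∏ j : Fin m, x (f j) j

lemma monotoneTupleSum_zero_left (k : ℕ) : monotoneTupleSum x 0 k = 1 := by
  simp [monotoneTupleSum, monotoneTuples]

lemma monotoneTupleSum_zero_right (m : ℕ) :
    monotoneTupleSum x m 0 = ∏ j : Fin m, x 0 j := by
  simp [monotoneTupleSum, monotoneTuples, Subsingleton.elim _ (0 : Fin 1)]

lemma sum_monotoneTuples_filter_apply_last_ne_last (p k : ℕ) :
    ∑ f ∈ (monotoneTuples (p + 1) (k + 2)).filter (· (Fin.last p) ≠ Fin.last (k + 1)),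
      ∏ j : Fin (p + 1), x (f j) j = monotoneTupleSum x (p + 1) k := by
  have ne_last {f} (hf : f ∈ (monotoneTuples (p + 1) (k + 2)).filter
      (· (Fin.last p) ≠ Fin.last (k + 1))) (j : Fin (p + 1)) : f j ≠ Fin.last (k + 1) := by
    rw [mem_filter, mem_monotoneTuples] at hf
    exact Fin.ne_last_of_lt ((hf.1 (Fin.le_last j)).trans_lt (Fin.lt_last_iff_ne_last.2 hf.2))
  refine sum_bij' (fun f hf j => (f j).castPred (ne_last hf j)) (fun g _ => Fin.castSucc ∘ g)
    (fun f hf => ?_) (fun g hg => ?_) (fun _ _ => rfl) (fun _ _ => rfl) (fun f hf => ?_)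
  · exact mem_monotoneTuples.2
      (Fin.monotone_castPred_comp (ne_last hf) (mem_monotoneTuples.1 (mem_filter.1 hf).1))
  · rw [mem_monotoneTuples] at hg
    exact mem_filter.2
      ⟨mem_monotoneTuples.2 (Fin.strictMono_castSucc.monotone.comp hg), Fin.castSucc_ne_last _⟩
  · simp

lemma sum_monotoneTuples_filter_apply_last_eq_last (p k : ℕ) :
    ∑ f ∈ (monotoneTuples (p + 1) (k + 2)).filter (· (Fin.last p) = Fin.last (k + 1)),
      ∏ j : Fin (p + 1), x (f j) j = x (k + 1) p * monotoneTupleSum x p (k + 1) := by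
  rw [monotoneTupleSum, mul_sum]
  refine sum_nbij' Fin.init (Fin.snoc · (Fin.last (k + 1)))
    (fun f hf => ?_) (fun g hg => ?_) (fun f hf => ?_) (fun _ _ => Fin.init_snoc _ _)
    (fun f hf => ?_)
  · rw [mem_filter, mem_monotoneTuples] at hf
    exact mem_monotoneTuples.2 (hf.1.comp Fin.strictMono_castSucc.monotone)
  · rw [mem_monotoneTuples] at hg
    exact mem_filter.2
      ⟨mem_monotoneTuples.2 (Fin.monotone_snoc_iff.2 ⟨hg, fun _ => Fin.le_last _⟩), Fin.snoc_last _ _⟩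
  · rw [← (mem_filter.1 hf).2]
    exact Fin.snoc_init_self f
  · rw [Fin.prod_univ_castSucc, (mem_filter.1 hf).2, mul_comm]
    simp [Fin.init]

lemma monotoneTupleSum_succ_succ (p k : ℕ) :
    monotoneTupleSum x (p + 1) (k + 1) =
      monotoneTupleSum x (p + 1) k + x (k + 1) p * monotoneTupleSum x p (k + 1) := by
  rw [← sum_monotoneTuples_filter_apply_last_ne_last x p k,
    ← sum_monotoneTuples_filter_apply_last_eq_last x p k]
  exact (sum_filter_not_add_sum_filter _ _ _).symm

end MonotoneTupleSum

section A

variable {K : Type*} [CommRing K] (v w : ℕ → K)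

lemma A_eq_zero_of_lt {n k : ℕ} (h : n < k) : A v w n k = 0 := by
  induction n generalizing k with
  | zero => obtain ⟨k, rfl⟩ := Nat.exists_eq_add_one_of_ne_zero h.ne'; rfl
  | succ n ih =>
    obtain ⟨k, rfl⟩ := Nat.exists_eq_add_one_of_ne_zero (Nat.ne_zero_of_lt h)
    simp [A, ih (Nat.lt_of_succ_lt_succ h), ih (Nat.lt_of_succ_lt h)]

lemma A_self (n : ℕ) : A v w n n = 1 := by
  induction n with
  | zero => rfl
  | succ n ih => simp [A, ih, A_eq_zero_of_lt v w n.lt_succ_self]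

lemma A_zero_right (n : ℕ) : A v w n 0 = ∏ j : Fin n, (v j + w 0) := by
  induction n with
  | zero => rfl
  | succ n ih => simp [A, ih, Fin.prod_univ_castSucc, mul_comm]

lemma A_add_eq_monotoneTupleSum (m k : ℕ) :
    A v w (k + m) k = monotoneTupleSum (fun i j => v (i + j) + w i) m k := by
  induction m generalizing k with
  | zero => rw [monotoneTupleSum_zero_left]; exact A_self v w k
  | succ m ihm =>
    induction k with
    | zero => simp [monotoneTupleSum_zero_right, A_zero_right]
    | succ k ihk =>
      rw [monotoneTupleSum_succ_succ, ← ihk, ← ihm,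
        show k + 1 + (m + 1) = k + (m + 1) + 1 by omega, A, show k + (m + 1) = k + 1 + m by omega]

end A

theorem stmt_1 {K : Type*} [CommRing K] (v w : ℕ → K) (n k : ℕ) (hk : k ≤ n) :
    A v w n k =
      ∑ f ∈ (Finset.univ : Finset (Fin (n - k) → Fin (k + 1))).filter
          (fun f => ∀ a b : Fin (n - k), a ≤ b → f a ≤ f b),
        ∏ j : Fin (n - k), (v ((f j : ℕ) + (j : ℕ)) + w (f j)) := by
  obtain ⟨m, rfl⟩ := Nat.exists_eq_add_of_le hk
  show _ = monotoneTupleSum (fun i j => v (i + j) + w i) (k + m - k) k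
  rw [Nat.add_sub_cancel_left]
  exact A_add_eq_monotoneTupleSum v w m k
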